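/- arXiv:2404.12685 — 3 statements merged into one kernel-verified Lean document; each statement's English description precedes it below -/
import Mathlib

section
/- Let k ≥ 1, let α_1, …, α_k be pairwise distinct real numbers and let c_1, …, c_k be real coefficients. If the generalized polynomial f(y) = Σ_{i=1}^k c_i y^{α_i} vanishes at k pairwise distinct strictly positive real points, then c_i = 0 for every i = 1, …, k. -/
open Real Finset

/-- An exponential sum with `k` distinct frequencies vanishing at `k` strictly
increasing points has all coefficients zero. -/
lemma expsum_eq_zero : ∀ (k : ℕ) (α c : Fin k → ℝ), Function.Injective α →
    ∀ t : Fin k → ℝ, StrictMono t →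
    (∀ j, ∑ i, c i * Real.exp (α i * t j) = 0) → ∀ i, c i = 0 := by
  intro k
  induction k with
  | zero => intro α c _ t _ _ i; exact i.elim0
  | succ n ih =>
    intro α c hα t ht hroot
    set β := α (Fin.last n) with hβ
    set d : Fin (n + 1) → ℝ := fun i => α i - β with hd
    have hzero : ∀ j, ∑ i, c i * Real.exp (d i * t j) = 0 := by
      intro j
      have h1 : ∑ i, c i * Real.exp (d i * t j)
          = Real.exp (-(β * t j)) * ∑ i, c i * Real.exp (α i * t j) := by
        rw [Finset.mul_sum]
        refine Finset.sum_congr rfl fun i _ => ?_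
        rw [hd, sub_mul, Real.exp_sub, Real.exp_neg]
        ring
      rw [h1, hroot j, mul_zero]
    have hrolle : ∀ j : Fin n, ∃ u ∈ Set.Ioo (t j.castSucc) (t j.succ),
        ∑ i, c i * (Real.exp (d i * u) * d i) = 0 := by
      intro j
      have hab : t j.castSucc < t j.succ := ht Fin.castSucc_lt_succ
      have hderiv : ∀ x ∈ Set.Ioo (t j.castSucc) (t j.succ),
          HasDerivAt (fun x => ∑ i, c i * Real.exp (d i * x))
            (∑ i, c i * (Real.exp (d i * x) * d i)) x := by
        intro x _
        apply HasDerivAt.fun_sum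
        intro i _
        have h1 : HasDerivAt (fun x : ℝ => d i * x) (d i) x := by
          simpa using (hasDerivAt_id x).const_mul (d i)
        exact h1.exp.const_mul (c i)
      have hcont : ContinuousOn (fun x => ∑ i, c i * Real.exp (d i * x))
          (Set.Icc (t j.castSucc) (t j.succ)) := by
        apply Continuous.continuousOn
        continuity
      exact exists_hasDerivAt_eq_zero hab hcont (by rw [hzero, hzero]) hderiv
    choose u hu hu0 using hrolle
    have humono : StrictMono u := by
      intro a b hab
      calc u a < t a.succ := (hu a).2
        _ ≤ t b.castSucc := ht.monotone (by
            simp only [Fin.le_def, Fin.lt_def] at hab ⊢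
            simp only [Fin.val_succ, Fin.coe_castSucc] at *
            omega)
        _ < u b := (hu b).1
    have hdinj : Function.Injective (fun i : Fin n => d i.castSucc) := by
      intro a b hab
      simp only [hd, sub_left_inj] at hab
      exact Fin.castSucc_injective n (hα hab)
    have hIH := ih (fun i => d i.castSucc) (fun i => c i.castSucc * d i.castSucc)
      hdinj u humono ?_
    · have hcz : ∀ i : Fin n, c i.castSucc = 0 := by
        intro i
        have hdne : d i.castSucc ≠ 0 := by
          simp only [hd, sub_ne_zero]
          intro h
          have := hα h
          have h2 : (i.castSucc : Fin (n + 1)) ≠ Fin.last n := by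
            simp [Fin.ext_iff]
            omega
          exact h2 this
        exact (mul_eq_zero.mp (hIH i)).resolve_right hdne
      have hlast : c (Fin.last n) = 0 := by
        have h0 := hroot (Fin.last n)
        rw [Fin.sum_univ_castSucc] at h0
        simp only [hcz, zero_mul, Finset.sum_const_zero, zero_add] at h0
        have hep := Real.exp_pos (α (Fin.last n) * t (Fin.last n))
        exact (mul_eq_zero.mp h0).resolve_right (ne_of_gt hep)
      intro i
      induction i using Fin.lastCases with
      | last => exact hlast
      | cast j => exact hcz j
    · intro j
      have h0 := hu0 j
      rw [Fin.sum_univ_castSucc] at h0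
      have hdlast : d (Fin.last n) = 0 := by simp [hd, hβ]
      rw [hdlast] at h0
      simp only [mul_zero, zero_mul, add_zero] at h0
      rw [← h0]
      exact Finset.sum_congr rfl fun i _ => by ring

/-- If a generalized polynomial `f(y) = ∑_{i=1}^k c_i y^{α_i}` with `k ≥ 1` pairwise
distinct real exponents `α_i` vanishes at `k` pairwise distinct strictly positive real
points, then all the coefficients `c_i` vanish. Here `y ^ α` is the real power (rpow). -/
theorem generalized_polynomial_vanishing_at_k_points
    (k : ℕ) (hk : 1 ≤ k) (α c : Fin k → ℝ)
    (hα : Function.Injective α)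
    (y : Fin k → ℝ) (hypos : ∀ j, 0 < y j) (hyinj : Function.Injective y)
    (hroot : ∀ j, ∑ i, c i * y j ^ α i = 0) :
    ∀ i, c i = 0 := by
  have hloginj : Function.Injective fun j => Real.log (y j) := by
    intro a b hab
    exact hyinj (Real.log_injOn_pos (Set.mem_Ioi.mpr (hypos a))
      (Set.mem_Ioi.mpr (hypos b)) hab)
  set T : Finset ℝ := Finset.image (fun j => Real.log (y j)) Finset.univ with hT
  have hcard : T.card = k := by
    rw [hT, Finset.card_image_of_injective _ hloginj, Finset.card_univ,
      Fintype.card_fin]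
  set t : Fin k → ℝ := fun j => (T.orderIsoOfFin hcard j : ℝ) with ht
  have htmono : StrictMono t := fun a b hab => by
    exact_mod_cast (T.orderIsoOfFin hcard).strictMono hab
  have hroot' : ∀ j, ∑ i, c i * Real.exp (α i * t j) = 0 := by
    intro j
    have hmem : t j ∈ T := (T.orderIsoOfFin hcard j).2
    rw [hT, Finset.mem_image] at hmem
    obtain ⟨j', -, hj'⟩ := hmem
    have : ∀ i, Real.exp (α i * t j) = y j' ^ α i := by
      intro i
      rw [← hj', Real.rpow_def_of_pos (hypos j'), mul_comm]
    simp only [this]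
    exact hroot j'
  exact expsum_eq_zero k α c hα t htmono hroot'
end

section
/- Let δ > 0 with δ ≠ 2, and let a, b, c, e be real numbers. If the function f(y) = a·y^{δ+2} + b·y^{δ} + c·y² + e vanishes at 4 pairwise distinct strictly positive real points, then a = b = c = e = 0. -/
private lemma hasDerivAt_exp_mul' (k x : ℝ) :
    HasDerivAt (fun t => Real.exp (k * t)) (k * Real.exp (k * x)) x := by
  simpa [mul_comm, Function.comp_def] using (Real.hasDerivAt_exp (k * x)).comp x ((hasDerivAt_id x).const_mul k)

private lemma rolle_zero {f f' : ℝ → ℝ} (hf : ∀ x, HasDerivAt f (f' x) x) {p q : ℝ}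
    (hpq : p < q) (hp : f p = 0) (hq : f q = 0) : ∃ u ∈ Set.Ioo p q, f' u = 0 := by
  obtain ⟨u, hu, hu'⟩ := exists_deriv_eq_zero hpq
    (fun x _ => (hf x).continuousAt.continuousWithinAt) (hp.trans hq.symm)
  exact ⟨u, hu, by rwa [(hf u).deriv] at hu'⟩

/-- Let `δ > 0` with `δ ≠ 2`. If `f(y) = a·y^{δ+2} + b·y^δ + c·y² + e` vanishes at `4`
pairwise distinct strictly positive real points, then `a = b = c = e = 0`.
Here `y ^ α` with a real exponent denotes the real power (rpow). -/
theorem apgarch_known_power_root_count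
    (δ a b c e : ℝ) (hδ : 0 < δ) (hδ2 : δ ≠ 2)
    (y : Fin 4 → ℝ) (hypos : ∀ j, 0 < y j) (hyinj : Function.Injective y)
    (hroot : ∀ j, a * y j ^ (δ + 2) + b * y j ^ δ + c * (y j) ^ 2 + e = 0) :
    a = 0 ∧ b = 0 ∧ c = 0 ∧ e = 0 := by
  set g : ℝ → ℝ := fun t =>
    a * Real.exp ((δ + 2) * t) + b * Real.exp (δ * t) + c * Real.exp (2 * t) + e with hg_def
  -- logs of roots
  set t : Fin 4 → ℝ := fun j => Real.log (y j) with ht_def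
  have ht_inj : Function.Injective t := by
    intro i j hij
    apply hyinj
    have := congrArg Real.exp hij
    rwa [Real.exp_log (hypos i), Real.exp_log (hypos j)] at this
  have hgt : ∀ j, g (t j) = 0 := by
    intro j
    have h1 : Real.exp ((δ + 2) * t j) = y j ^ (δ + 2) := by
      rw [Real.rpow_def_of_pos (hypos j), mul_comm]
    have h2 : Real.exp (δ * t j) = y j ^ δ := by
      rw [Real.rpow_def_of_pos (hypos j), mul_comm]
    have h3 : Real.exp (2 * t j) = y j ^ 2 := by
      rw [two_mul, Real.exp_add, Real.exp_log (hypos j)]; ring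
    simp only [hg_def, h1, h2, h3]
    exact hroot j
  -- sorted roots
  set s : Fin 4 → ℝ := t ∘ Tuple.sort t with hs_def
  have hs_mono : StrictMono s :=
    (Tuple.monotone_sort t).strictMono_of_injective (ht_inj.comp (Equiv.injective _))
  have hgs : ∀ i, g (s i) = 0 := fun i => hgt _
  -- derivative of g
  set g' : ℝ → ℝ := fun x =>
    a * (δ + 2) * Real.exp ((δ + 2) * x) + b * δ * Real.exp (δ * x) + c * 2 * Real.exp (2 * x)
    with hg'_def
  have hder : ∀ x, HasDerivAt g (g' x) x := by
    intro x
    have := ((((hasDerivAt_exp_mul' (δ + 2) x).const_mul a).add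
        ((hasDerivAt_exp_mul' δ x).const_mul b)).add
        ((hasDerivAt_exp_mul' 2 x).const_mul c)).add (hasDerivAt_const x e)
    convert this using 1
    any_goals rfl
    simp only [hg'_def]; ring
  -- first Rolle layer
  obtain ⟨u0, hu0, hgu0⟩ := rolle_zero hder (hs_mono (by decide : (0:Fin 4) < 1)) (hgs 0) (hgs 1)
  obtain ⟨u1, hu1, hgu1⟩ := rolle_zero hder (hs_mono (by decide : (1:Fin 4) < 2)) (hgs 1) (hgs 2)
  obtain ⟨u2, hu2, hgu2⟩ := rolle_zero hder (hs_mono (by decide : (2:Fin 4) < 3)) (hgs 2) (hgs 3)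
  have hu01 : u0 < u1 := lt_trans hu0.2 hu1.1
  have hu12 : u1 < u2 := lt_trans hu1.2 hu2.1
  -- divide by exp(2x)
  set g1 : ℝ → ℝ := fun x =>
    a * (δ + 2) * Real.exp (δ * x) + b * δ * Real.exp ((δ - 2) * x) + c * 2 with hg1_def
  have hg1 : ∀ x, g' x = 0 → g1 x = 0 := by
    intro x hx
    have e1 : Real.exp (δ * x) * Real.exp (2 * x) = Real.exp ((δ + 2) * x) := by
      rw [← Real.exp_add]; ring_nf
    have e2 : Real.exp ((δ - 2) * x) * Real.exp (2 * x) = Real.exp (δ * x) := by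
      rw [← Real.exp_add]; ring_nf
    have hz : g1 x * Real.exp (2 * x) = 0 := by
      simp only [hg1_def, hg'_def] at *
      linear_combination hx + a * (δ + 2) * e1 + b * δ * e2
    exact (mul_eq_zero.mp hz).resolve_right (Real.exp_ne_zero _)
  have hg1u0 := hg1 u0 hgu0
  have hg1u1 := hg1 u1 hgu1
  have hg1u2 := hg1 u2 hgu2
  -- derivative of g1
  set g1' : ℝ → ℝ := fun x =>
    a * (δ + 2) * δ * Real.exp (δ * x) + b * δ * (δ - 2) * Real.exp ((δ - 2) * x) with hg1'_def
  have hder1 : ∀ x, HasDerivAt g1 (g1' x) x := by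
    intro x
    have := (((hasDerivAt_exp_mul' δ x).const_mul (a * (δ + 2))).add
        ((hasDerivAt_exp_mul' (δ - 2) x).const_mul (b * δ))).add (hasDerivAt_const x (c * 2))
    convert this using 1
    any_goals rfl
    simp only [hg1'_def]; ring
  obtain ⟨v0, hv0, hg1v0⟩ := rolle_zero hder1 hu01 hg1u0 hg1u1
  obtain ⟨v1, hv1, hg1v1⟩ := rolle_zero hder1 hu12 hg1u1 hg1u2
  have hv01 : v0 < v1 := lt_trans hv0.2 hv1.1
  -- divide by exp((δ-2)x)
  set g2 : ℝ → ℝ := fun x => a * (δ + 2) * δ * Real.exp (2 * x) + b * δ * (δ - 2) with hg2_def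
  have hg2 : ∀ x, g1' x = 0 → g2 x = 0 := by
    intro x hx
    have e3 : Real.exp (2 * x) * Real.exp ((δ - 2) * x) = Real.exp (δ * x) := by
      rw [← Real.exp_add]; ring_nf
    have hz : g2 x * Real.exp ((δ - 2) * x) = 0 := by
      simp only [hg2_def, hg1'_def] at *
      linear_combination hx + a * (δ + 2) * δ * e3
    exact (mul_eq_zero.mp hz).resolve_right (Real.exp_ne_zero _)
  have hg2v0 := hg2 v0 hg1v0
  have hg2v1 := hg2 v1 hg1v1
  -- derivative of g2
  set g2' : ℝ → ℝ := fun x => a * (δ + 2) * δ * 2 * Real.exp (2 * x) with hg2'_def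
  have hder2 : ∀ x, HasDerivAt g2 (g2' x) x := by
    intro x
    have := ((hasDerivAt_exp_mul' 2 x).const_mul (a * (δ + 2) * δ)).add
      (hasDerivAt_const x (b * δ * (δ - 2)))
    convert this using 1
    any_goals rfl
    simp only [hg2'_def]; ring
  obtain ⟨w, hw, hg2w⟩ := rolle_zero hder2 hv01 hg2v0 hg2v1
  -- extract coefficients
  have hδ0 : δ ≠ 0 := ne_of_gt hδ
  have hδp2 : δ + 2 ≠ 0 := by positivity
  have ha : a = 0 := by
    simp only [hg2'_def] at hg2w
    rcases mul_eq_zero.mp hg2w with h | h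
    · simpa [mul_eq_zero, hδ0, hδp2] using h
    · exact absurd h (Real.exp_ne_zero _)
  have hb : b = 0 := by
    simp only [hg2_def, ha] at hg2v0
    have : b * δ * (δ - 2) = 0 := by linarith
    rcases mul_eq_zero.mp this with h | h
    · rcases mul_eq_zero.mp h with h' | h' <;> [exact h'; exact absurd h' hδ0]
    · exact absurd (by linarith : δ = 2) hδ2
  have hc : c = 0 := by
    simp only [hg1_def, ha, hb] at hg1u0
    linarith
  have he : e = 0 := by
    have := hgs 0
    simp only [hg_def, ha, hb, hc] at this
    linarith
  exact ⟨ha, hb, hc, he⟩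
end

section
/- Let (Ω, F, ℙ) be a probability space and (X_t)_{t≥1} a sequence of nonnegative measurable random variables. Assume there exist s ∈ (0,1), K ≥ 0 and ρ ∈ (0,1) such that E[X_t^s] ≤ K·ρ^{t·s} for every t ≥ 1. Then the sequence n ↦ n^{−1/2} Σ_{t=1}^n X_t converges to 0 in probability as n → ∞. -/
open MeasureTheory Filter

/-- Auxiliary: `sqrt n → ∞`. -/
lemma aux_sqrt_nat_atTop : Tendsto (fun n : ℕ => Real.sqrt n) atTop atTop := by
  refine tendsto_atTop_atTop.mpr fun b => ⟨⌈(max b 0) ^ 2⌉₊, fun n hn => ?_⟩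
  have h1 : (max b 0) ^ 2 ≤ (n : ℝ) := le_trans (Nat.le_ceil _) (by exact_mod_cast hn)
  calc b ≤ max b 0 := le_max_left _ _
    _ = Real.sqrt ((max b 0) ^ 2) := (Real.sqrt_sq (le_max_right b 0)).symm
    _ ≤ Real.sqrt n := Real.sqrt_le_sqrt h1

/-- If `(X_t)` are nonnegative random variables with `E[X_t^s] ≤ K·ρ^{t·s}` for some
`s ∈ (0,1)`, `K ≥ 0`, `ρ ∈ (0,1)`, then `n^{-1/2} ∑_{t=1}^n X_t → 0` in probability.
Here `x ^ s` with a real exponent denotes the real power (rpow). -/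
theorem initial_values_no_asymptotic_impact
    {Ω : Type*} [MeasurableSpace Ω] (μ : Measure Ω) [IsProbabilityMeasure μ]
    (X : ℕ → Ω → ℝ) (hXmeas : ∀ t, Measurable (X t)) (hXpos : ∀ t ω, 0 ≤ X t ω)
    (s K ρ : ℝ) (hs : s ∈ Set.Ioo (0 : ℝ) 1) (hK : 0 ≤ K) (hρ : ρ ∈ Set.Ioo (0 : ℝ) 1)
    (hmom : ∀ t, 1 ≤ t →
      ∫⁻ ω, ENNReal.ofReal (X t ω ^ s) ∂μ ≤ ENNReal.ofReal (K * ρ ^ ((t : ℝ) * s))) :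
    TendstoInMeasure μ
      (fun (n : ℕ) ω => (Real.sqrt (n : ℝ))⁻¹ * ∑ t ∈ Finset.Icc 1 n, X t ω) atTop (fun _ => 0) := by
  obtain ⟨hs0, hs1⟩ := hs
  obtain ⟨hρ0, hρ1⟩ := hρ
  set r : ENNReal := ENNReal.ofReal (ρ ^ s) with hr
  have hrlt : r < 1 := ENNReal.ofReal_lt_one.mpr (Real.rpow_lt_one hρ0.le hρ1 hs0)
  have hmeas : ∀ t, Measurable fun ω => ENNReal.ofReal (X t ω ^ s) := by
    intro t
    have heq : (fun ω => ENNReal.ofReal (X t ω ^ s))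
        = fun ω => (ENNReal.ofReal (X t ω)) ^ s := by
      funext ω; rw [ENNReal.ofReal_rpow_of_nonneg (hXpos t ω) hs0.le]
    rw [heq]
    exact ENNReal.continuous_rpow_const.measurable.comp (hXmeas t).ennreal_ofReal
  -- Step 1: the lintegral of the tsum is finite
  have hsum_int : ∫⁻ ω, ∑' t : ℕ, ENNReal.ofReal (X (t + 1) ω ^ s) ∂μ ≠ ⊤ := by
    rw [lintegral_tsum fun t => (hmeas (t + 1)).aemeasurable]
    have hb : ∀ t : ℕ, ∫⁻ ω, ENNReal.ofReal (X (t + 1) ω ^ s) ∂μ ≤ ENNReal.ofReal K * r ^ t := by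
      intro t
      refine (hmom (t + 1) (by omega)).trans ?_
      rw [ENNReal.ofReal_mul hK]
      refine mul_le_mul_right ?_ _
      rw [hr, ← ENNReal.ofReal_pow (Real.rpow_nonneg hρ0.le s)]
      apply ENNReal.ofReal_le_ofReal
      rw [← Real.rpow_natCast (ρ ^ s) t, ← Real.rpow_mul hρ0.le]
      apply Real.rpow_le_rpow_of_exponent_ge hρ0 hρ1.le
      have : (0:ℝ) ≤ (t : ℝ) * s := mul_nonneg (Nat.cast_nonneg t) hs0.le
      push_cast
      nlinarith [hs0.le, hs1.le]
    refine ne_top_of_le_ne_top ?_ (ENNReal.tsum_le_tsum hb)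
    rw [ENNReal.tsum_mul_left, ENNReal.tsum_geometric]
    exact ENNReal.mul_ne_top ENNReal.ofReal_ne_top
      (ENNReal.inv_ne_top.mpr (by simp [tsub_eq_zero_iff_le, not_le, hrlt]))
  -- Step 2: a.e. finiteness
  have hae : ∀ᵐ ω ∂μ, ∑' t : ℕ, ENNReal.ofReal (X (t + 1) ω ^ s) < ⊤ :=
    ae_lt_top (Measurable.ennreal_tsum fun t => hmeas (t + 1)) hsum_int
  -- Step 3: a.e. convergence to 0
  have haet : ∀ᵐ ω ∂μ, Tendsto
      (fun n : ℕ => (Real.sqrt (n : ℝ))⁻¹ * ∑ t ∈ Finset.Icc 1 n, X t ω) atTop (nhds 0) := by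
    filter_upwards [hae] with ω hfin
    -- summability of `X (t+1) ω ^ s`
    have hsummable_s : Summable fun t : ℕ => X (t + 1) ω ^ s := by
      have := ENNReal.summable_toReal hfin.ne
      simpa [ENNReal.toReal_ofReal (Real.rpow_nonneg (hXpos _ _) s)] using this
    -- eventually `X (t+1) ω ≤ X (t+1) ω ^ s`
    obtain ⟨N, hN⟩ := eventually_atTop.mp
      (hsummable_s.tendsto_atTop_zero.eventually (eventually_le_nhds (by norm_num : (0:ℝ) < 1)))
    have hle : ∀ t, N ≤ t → X (t + 1) ω ≤ X (t + 1) ω ^ s := by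
      intro t ht
      rcases eq_or_lt_of_le (hXpos (t + 1) ω) with h0 | h0
      · rw [← h0, Real.zero_rpow hs0.ne']
      · have hx1 : X (t + 1) ω ≤ 1 := by
          by_contra h
          push_neg at h
          have : 1 < X (t + 1) ω ^ s :=
            (Real.one_lt_rpow_iff_of_pos h0).mpr (Or.inl ⟨h, hs0⟩)
          linarith [hN t ht]
        calc X (t + 1) ω = X (t + 1) ω ^ (1 : ℝ) := (Real.rpow_one _).symm
          _ ≤ X (t + 1) ω ^ s := Real.rpow_le_rpow_of_exponent_ge h0 hx1 hs1.le
    -- summability of `X (t+1) ω`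
    have hsummable : Summable fun t : ℕ => X (t + 1) ω := by
      rw [← summable_nat_add_iff N]
      refine Summable.of_nonneg_of_le (fun t => hXpos _ _) (fun t => hle (t + N) (by omega)) ?_
      exact (summable_nat_add_iff N).mpr hsummable_s
    set S := ∑' t : ℕ, X (t + 1) ω with hS
    have hbound : ∀ n : ℕ, ∑ t ∈ Finset.Icc 1 n, X t ω ≤ S := by
      intro n
      have : ∑ t ∈ Finset.Icc 1 n, X t ω = ∑ i ∈ Finset.range n, X (i + 1) ω := by
        rw [Finset.range_eq_Ico]
        refine Finset.sum_nbij' (fun t => t - 1) (fun i => i + 1) ?_ ?_ ?_ ?_ ?_ <;>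
          simp +contextual [Finset.mem_Icc, Finset.mem_Ico] <;> omega
      rw [this]
      exact Summable.sum_le_tsum _ (fun i _ => hXpos _ _) hsummable
    have hS0 : 0 ≤ S := tsum_nonneg fun t => hXpos _ _
    refine squeeze_zero (g := fun n : ℕ => (Real.sqrt (n : ℝ))⁻¹ * S) (fun n => mul_nonneg (inv_nonneg.mpr (Real.sqrt_nonneg _))
      (Finset.sum_nonneg fun t _ => hXpos t ω)) (fun n => ?_) ?_
    · exact mul_le_mul_of_nonneg_left (hbound n) (inv_nonneg.mpr (Real.sqrt_nonneg _))
    · have h1 : Tendsto (fun n : ℕ => (Real.sqrt (n : ℝ))⁻¹) atTop (nhds 0) :=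
        aux_sqrt_nat_atTop.inv_tendsto_atTop
      simpa using h1.mul_const S
  -- conclude
  refine tendstoInMeasure_of_tendsto_ae (fun n => ?_) haet
  exact (measurable_const.mul (Finset.measurable_sum _ fun t _ => hXmeas t)).aestronglyMeasurable
end
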